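/- For reals C > 0, s, t, t_i, f_u with s + t_i > C/φ, f_u ≤ C/φ², t ≤ t_i + f_u, and s + t_i ≤ C, where φ = (1+√5)/2, we have (s + t)/(s + t_i) ≤ φ. -/
import Mathlib

theorem fbig_slow_check (φ C s t ti fu : ℝ)
    (hφ : φ = (1 + Real.sqrt 5) / 2)
    (hC : 0 < C) (h1 : s + ti > C / φ) (h2 : fu ≤ C / φ ^ 2)
    (h3 : t ≤ ti + fu) (h4 : s + ti ≤ C) :
    (s + t) / (s + ti) ≤ φ := by
  have h5 : Real.sqrt 5 ^ 2 = 5 := Real.sq_sqrt (by norm_num)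
  have hs5 : (2:ℝ) ≤ Real.sqrt 5 := by nlinarith [Real.sqrt_nonneg 5]
  have hφ1 : 1 < φ := by rw [hφ]; linarith
  have hφsq : φ ^ 2 = φ + 1 := by rw [hφ]; nlinarith
  have hφ0 : 0 < φ := by linarith
  have hpos : 0 < s + ti := lt_trans (div_pos hC hφ0) h1
  rw [div_le_iff₀ hpos]
  -- fu ≤ C/φ² = (φ-1)C/φ < (φ-1)(s+ti)
  have key : C / φ ^ 2 ≤ (φ - 1) * (s + ti) := by
    rw [div_le_iff₀ (by positivity)]
    have h1' : C ≤ φ * (s + ti) := by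
      rw [gt_iff_lt, div_lt_iff₀ hφ0] at h1
      nlinarith
    nlinarith
  nlinarith
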